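/- arXiv:0809.0804 — 8 statements merged into one kernel-verified Lean document; each statement's English description precedes it below -/
import Mathlib

section
/- Let R be a commutative ring, let r be a natural number, and let λ₁,…,λ_r, h₁,…,h_r, k₁,…,k_r, d, x be elements of R. Let M be the (r+1)×(r+1) matrix over R whose entries are: M_{i,i} = x − λᵢ for 1 ≤ i ≤ r, M_{i,r+1} = hᵢ and M_{r+1,i} = kᵢ for 1 ≤ i ≤ r, M_{r+1,r+1} = x − d, and all other entries 0. Then det M = (x − d)·∏_{i=1}^{r}(x − λᵢ) − Σ_{i=1}^{r} hᵢ·kᵢ·∏_{j≠i}(x − λⱼ). -/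
/-!
Write `M` as the bordered matrix `[[A, b], [cᵀ, δ]]` with `A = diagonal (x - λ)`. Multiplying it
on the right by `[[1, -adj(A) b], [0, det A]]` gives a block lower-triangular matrix, whence
`det M * det A = det A * (δ * det A - cᵀ adj(A) b)`. This cancels when `det A` is a non-zero-divisor,
and the general case follows by the usual trick of replacing `A` by `X + A` over `R[X]` (whose
determinant is monic) and evaluating at `0`. For diagonal `A` the adjugate is diagonal with entries
`∏_{j ≠ i} (x - λⱼ)`.
-/

open Matrix Polynomial

namespace Matrix

variable {R : Type*} [CommRing R] {m p : Type*} [Fintype m] [DecidableEq m]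
  [Fintype p] [DecidableEq p]

theorem det_fromBlocks_mul_det_pow (A : Matrix m m R) (B : Matrix m p R) (C : Matrix p m R)
    (D : Matrix p p R) :
    (fromBlocks A B C D).det * A.det ^ Fintype.card p
      = A.det * (A.det • D - C * adjugate A * B).det := by
  have hprod : fromBlocks A B C D * fromBlocks 1 (-(adjugate A * B)) 0 (A.det • 1)
      = fromBlocks A 0 C (A.det • D - C * adjugate A * B) := by
    simp [fromBlocks_multiply, ← Matrix.mul_assoc, mul_adjugate, sub_eq_neg_add]
  have := congrArg det hprod
  rwa [det_mul, det_fromBlocks_zero₂₁, det_fromBlocks_zero₁₂, det_one, one_mul, det_smul,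
    det_one, mul_one] at this

theorem det_fromBlocks_replicateCol_replicateRow_of_isLeftRegular [Unique p] {A : Matrix m m R}
    (hA : IsLeftRegular A.det) (b c : m → R) (δ : R) :
    (fromBlocks A (replicateCol p b) (replicateRow p c) (of fun _ _ => δ)).det
      = δ * A.det - c ⬝ᵥ (adjugate A *ᵥ b) := by
  have := det_fromBlocks_mul_det_pow A (replicateCol p b) (replicateRow p c) (of fun _ _ => δ)
  rw [Fintype.card_unique, pow_one, det_unique (_ - _), Matrix.mul_assoc, ← replicateCol_mulVec,
    replicateRow_mul_replicateCol, mul_comm] at this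
  exact hA (by simpa [mul_comm] using this)

theorem det_fromBlocks_replicateCol_replicateRow [Unique p] (A : Matrix m m R)
    (b c : m → R) (δ : R) :
    (fromBlocks A (replicateCol p b) (replicateRow p c) (of fun _ _ => δ)).det
      = δ * A.det - c ⬝ᵥ (adjugate A *ᵥ b) := by
  let A' : Matrix m m R[X] := A.map C + (X : R[X]) • 1
  have hA' : IsLeftRegular A'.det := by
    refine (Monic.isRegular ?_).left
    simp only [A', Monic.def, ← leadingCoeff_det_X_one_add_C A, add_comm]
  have hev : (evalRingHom 0).mapMatrix A' = A := by ext; simp [A']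
  have hadj (i j : m) : eval 0 (A'.adjugate i j) = A.adjugate i j := by
    rw [← hev, ← RingHom.map_adjugate]; rfl
  have hdet : eval 0 A'.det = A.det := by
    rw [← hev, ← RingHom.map_det]; rfl
  have key := congrArg (eval 0) <| det_fromBlocks_replicateCol_replicateRow_of_isLeftRegular
    (p := p) hA' (C ∘ b) (C ∘ c) (C δ)
  rw [← coe_evalRingHom, RingHom.map_det] at key
  convert key using 2
  · ext i j; rcases i with i | i <;> rcases j with j | j <;> simp [A']
  · simp [dotProduct, mulVec, hadj, hdet, eval_finsetSum]

theorem det_fromBlocks_diagonal_replicateCol_replicateRow [Unique p] (v b c : m → R) (δ : R) :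
    (fromBlocks (diagonal v) (replicateCol p b) (replicateRow p c) (of fun _ _ => δ)).det
      = δ * ∏ i, v i - ∑ i, b i * c i * ∏ j ∈ Finset.univ.erase i, v j := by
  rw [det_fromBlocks_replicateCol_replicateRow, det_diagonal, adjugate_diagonal]
  simp only [dotProduct, mulVec_diagonal]
  congr 1
  exact Finset.sum_congr rfl fun i _ => by ring

end Matrix

theorem stmt_1 (R : Type*) [CommRing R] (r : ℕ)
    (lam h k : Fin r → R) (d x : R)
    (M : Matrix (Fin (r + 1)) (Fin (r + 1)) R)
    (hM : M = Matrix.of fun (i j : Fin (r + 1)) =>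
      if hi : (i : ℕ) < r then
        (if hj : (j : ℕ) < r then
          (if i = j then x - lam ⟨i, hi⟩ else 0)
        else h ⟨i, hi⟩)
      else
        (if hj : (j : ℕ) < r then k ⟨j, hj⟩ else x - d)) :
    M.det = (x - d) * ∏ i, (x - lam i)
      - ∑ i, h i * k i * ∏ j ∈ Finset.univ.erase i, (x - lam j) := by
  have hblocks : M = reindex finSumFinEquiv finSumFinEquiv
      (fromBlocks (diagonal fun i => x - lam i) (replicateCol (Fin 1) h)
        (replicateRow (Fin 1) k) (of fun _ _ => x - d)) := by
    subst hM
    ext i j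
    refine Fin.addCases (fun i => ?_) (fun i => ?_) i <;>
      refine Fin.addCases (fun j => ?_) (fun j => ?_) j <;>
      simp [diagonal_apply, Fin.ext_iff]
  rw [hblocks, det_reindex_self, det_fromBlocks_diagonal_replicateCol_replicateRow]
end

section
/- Let R be a commutative ring, let r be a natural number, let B be an r×r matrix over R, let H be an r×1 column matrix, let K be a 1×r row matrix, and let d ∈ R. Then the determinant of the (r+1)×(r+1) block matrix [[B, H],[K, d]] equals d·det(B) − K·adj(B)·H, where adj(B) denotes the adjugate of B (the transpose of the cofactor matrix) and K·adj(B)·H is the resulting 1×1 scalar. -/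
/-!
Left multiplication by `[[1, 0], [-(K * adj B), det B]]` clears `K`, because
`K * adj B * B = det B • K`, and turns the bottom-right entry into `det B * d - K * adj B * H`.
Taking determinants gives `det B * det [[B, H], [K, d]] = det B * (d * det B - K * adj B * H)`,
so the formula holds whenever `det B` is a non-zero-divisor. In general, replace `B` by
`X • 1 + B` over `R[X]`, whose determinant is monic, and specialize at `X = 0`.
-/

open Matrix Polynomial

namespace Matrix

variable {R : Type*} [CommRing R] {m ι : Type*} [Fintype m] [DecidableEq m] [Unique ι]

theorem fromBlocks_neg_mul_adjugate_mul_fromBlocks (B : Matrix m m R) (H : Matrix m ι R)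
    (K : Matrix ι m R) (d : R) :
    fromBlocks 1 0 (-(K * B.adjugate)) (of fun _ _ => B.det) * fromBlocks B H K (of fun _ _ => d)
      = fromBlocks B H 0 (of fun _ _ => B.det * d - (K * B.adjugate * H) default default) := by
  have h₂₁ : -(K * B.adjugate) * B + (of fun _ _ => B.det : Matrix ι ι R) * K = 0 := by
    rw [Matrix.neg_mul, Matrix.mul_assoc, adjugate_mul]
    ext i j
    simp [Matrix.mul_apply, Unique.eq_default i, mul_comm]
  have h₂₂ : -(K * B.adjugate) * H
        + (of fun _ _ => B.det : Matrix ι ι R) * (of fun _ _ => d : Matrix ι ι R)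
      = of fun _ _ => B.det * d - (K * B.adjugate * H) default default := by
    ext i j
    simp [Matrix.mul_apply, Unique.eq_default i, Unique.eq_default j, sub_eq_neg_add]
  rw [fromBlocks_multiply, h₂₁, h₂₂]
  simp

variable [DecidableEq ι]

theorem det_mul_det_fromBlocks_unique (B : Matrix m m R) (H : Matrix m ι R) (K : Matrix ι m R)
    (d : R) :
    B.det * (fromBlocks B H K (of fun _ _ => d)).det
      = B.det * (d * B.det - (K * B.adjugate * H) default default) := by
  have h := congrArg det (fromBlocks_neg_mul_adjugate_mul_fromBlocks B H K d)
  rw [det_mul, det_fromBlocks_zero₁₂, det_fromBlocks_zero₂₁] at h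
  simpa [det_unique, mul_comm] using h

theorem det_fromBlocks_unique_of_isLeftRegular {B : Matrix m m R} (hB : IsLeftRegular B.det)
    (H : Matrix m ι R) (K : Matrix ι m R) (d : R) :
    (fromBlocks B H K (of fun _ _ => d)).det = d * B.det - (K * B.adjugate * H) default default :=
  hB (det_mul_det_fromBlocks_unique B H K d)

theorem det_fromBlocks_unique (B : Matrix m m R) (H : Matrix m ι R) (K : Matrix ι m R) (d : R) :
    (fromBlocks B H K (of fun _ _ => d)).det = d * B.det - (K * B.adjugate * H) default default := by
  let B' : Matrix m m R[X] := (X : R[X]) • 1 + B.map C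
  have hB' : IsLeftRegular B'.det := (Monic.isRegular (leadingCoeff_det_X_one_add_C B)).left
  have hB'_eval : B'.map (evalRingHom 0) = B := by ext; simp [B', one_apply, apply_ite]
  have hadj_eval : B'.adjugate.map (evalRingHom 0) = B.adjugate := by
    rw [← RingHom.mapMatrix_apply, RingHom.map_adjugate, RingHom.mapMatrix_apply, hB'_eval]
  have hd_eval : (of fun _ _ => C d : Matrix ι ι R[X]).map (eval 0) = of fun _ _ => d := by
    ext; simp
  have h := congrArg (evalRingHom 0)
    (det_fromBlocks_unique_of_isLeftRegular hB' (H.map C) (K.map C) (C d))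
  simp only [RingHom.map_det, RingHom.mapMatrix_apply, fromBlocks_map, map_sub, map_mul] at h
  rw [← Matrix.map_apply (f := ⇑(evalRingHom (0 : R))), Matrix.map_mul, Matrix.map_mul,
    hadj_eval, hB'_eval] at h
  simpa [hd_eval, Function.comp_def] using h

end Matrix

theorem stmt_2 (R : Type*) [CommRing R] (r : ℕ)
    (B : Matrix (Fin r) (Fin r) R) (H : Matrix (Fin r) (Fin 1) R)
    (K : Matrix (Fin 1) (Fin r) R) (d : R) :
    (Matrix.fromBlocks B H K (Matrix.of fun (_ _ : Fin 1) => d)).det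
      = d * B.det - (K * B.adjugate * H) 0 0 :=
  det_fromBlocks_unique B H K d
end

section
/- Let R be a commutative ring, let n be a natural number, let A be an (n+1)×(n+1) matrix over R, let B be the top-left n×n submatrix of A, and let ε ∈ R. Let A_ε be the matrix obtained from A by adding ε to the bottom-right entry (i.e. A_ε = A + ε·E_{n+1,n+1}, where E_{n+1,n+1} is the matrix with a single 1 in position (n+1, n+1)). Then the characteristic polynomials satisfy charpoly(A_ε) = charpoly(A) − ε·charpoly(B) in R[X]. -/
/-!
Adding `ε` to the diagonal entry `(i, i)` of `A` subtracts `C ε` from the `i`-th row of the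
characteristic matrix `X • 1 - A` in the `i`-th place only. By multilinearity of the determinant
in that row, the characteristic polynomial changes by `-C ε` times the determinant of the
characteristic matrix with row `i` replaced by the unit vector `eᵢ`, i.e. by its diagonal
cofactor, which is the characteristic polynomial of `A` with row and column `i` deleted.
-/

open Matrix Polynomial

theorem Matrix.add_smul_single_eq_updateRow {n R : Type*} [DecidableEq n] [CommRing R]
    (M : Matrix n n R) (i : n) (c : R) :
    M + c • single i i 1 = M.updateRow i (M i + c • Pi.single i 1) := by
  ext k l
  rcases eq_or_ne k i with rfl | hk
  · simp [Pi.single_apply, single_apply, eq_comm]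
  · simp [hk, single_apply_of_row_ne hk.symm]

section

variable {m n R : Type*} [Fintype m] [DecidableEq m] [Fintype n] [DecidableEq n] [CommRing R]

theorem Matrix.det_add_smul_single (M : Matrix n n R) (i : n) (c : R) :
    (M + c • single i i 1).det = M.det + c * M.adjugate i i := by
  rw [add_smul_single_eq_updateRow, det_updateRow_add, det_updateRow_smul, updateRow_eq_self,
    adjugate_apply]

theorem Matrix.charmatrix_add_smul_single (M : Matrix n n R) (i : n) (c : R) :
    charmatrix (M + c • single i i 1) = charmatrix M + (-C c) • single i i 1 := by
  ext k l : 1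
  rcases eq_or_ne k l with rfl | hkl
  · rcases eq_or_ne k i with rfl | hk
    · simp only [charmatrix_apply_eq, add_apply, smul_apply, single_apply_same, smul_eq_mul,
        mul_one, map_add]
      ring
    · simp [single_apply_of_row_ne hk.symm]
  · have hi : ¬(i = k ∧ i = l) := fun h => hkl (h.1.symm.trans h.2)
    simp [charmatrix_apply_ne _ _ _ hkl, hi]

theorem Matrix.charmatrix_submatrix (M : Matrix n n R) {e : m → n} (he : Function.Injective e) :
    charmatrix (M.submatrix e e) = (charmatrix M).submatrix e e := by
  ext k l : 1
  rcases eq_or_ne k l with rfl | hkl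
  · simp
  · simp [charmatrix_apply_ne _ _ _ hkl, charmatrix_apply_ne _ _ _ (he.ne hkl)]

end

theorem Matrix.charpoly_add_smul_single {n : ℕ} {R : Type*} [CommRing R]
    (M : Matrix (Fin (n + 1)) (Fin (n + 1)) R) (i : Fin (n + 1)) (c : R) :
    (M + c • single i i 1).charpoly
      = M.charpoly - C c * (M.submatrix i.succAbove i.succAbove).charpoly := by
  rw [charpoly, charmatrix_add_smul_single, det_add_smul_single,
    adjugate_fin_succ_eq_det_submatrix, (Even.add_self (i : ℕ)).neg_one_pow, one_mul,
    charpoly, charpoly, charmatrix_submatrix _ Fin.succAbove_right_injective, neg_mul,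
    sub_eq_add_neg]

theorem stmt_3 (R : Type*) [CommRing R] (n : ℕ)
    (A : Matrix (Fin (n + 1)) (Fin (n + 1)) R)
    (B : Matrix (Fin n) (Fin n) R)
    (hB : B = A.submatrix Fin.castSucc Fin.castSucc)
    (ε : R)
    (Aε : Matrix (Fin (n + 1)) (Fin (n + 1)) R)
    (hAε : Aε = A + ε • Matrix.single (Fin.last n) (Fin.last n) (1 : R)) :
    Aε.charpoly = A.charpoly - Polynomial.C ε * B.charpoly := by
  rw [hAε, hB, charpoly_add_smul_single, Fin.succAbove_last]
end

section
/- Let n be a natural number, let A be a real (n+1)×(n+1) matrix, and let B be the top-left n×n submatrix of A. Suppose the characteristic polynomial of B has n distinct roots in ℂ (all complex eigenvalues of B are simple). Then the set of ε ∈ ℝ for which the characteristic polynomial of A + ε·E_{n+1,n+1} has a repeated root in ℂ is finite; equivalently, for all but finitely many ε ∈ ℝ, the matrix A + ε·E_{n+1,n+1} has n+1 distinct complex eigenvalues. -/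
/-!
Expanding the determinant along the last row gives the pencil
`χ(A + ε E) = p - ε q` with `p = χ(A)` and `q = χ(B)`. If `z` is a multiple root of `p - ε q`, then
`p(z) = ε q(z)` and `p'(z) = ε q'(z)`, so `z` is a root of the Wronskian `W = p q' - p' q`. Since `p`
and `q` are monic of degrees `n + 1` and `n`, `W = W(p - X q, q) - q²` has degree exactly `2n`,
so it has finitely many roots. At each of them `q(z)` and `q'(z)` do not both vanish because `q`
has simple roots, and therefore `ε` is determined by `z`.
-/

open Matrix Polynomial

namespace Matrix

theorem charmatrix_add_smul_single_self {m R : Type*} [Fintype m] [DecidableEq m] [CommRing R]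
    (M : Matrix m m R) (i : m) (c : R) :
    charmatrix (M + c • single i i 1) =
      (charmatrix M).updateRow i (charmatrix M i - C c • Pi.single i 1) := by
  ext a b
  by_cases ha : a = i
  · subst ha
    by_cases hb : b = a
    · subst hb; simp; ring
    · simp [hb, Ne.symm hb, single]
  · simp [charmatrix_apply, ha, single, Ne.symm ha]

theorem charpoly_add_smul_single_self {R : Type*} [CommRing R] {m : ℕ}
    (M : Matrix (Fin (m + 1)) (Fin (m + 1)) R) (i : Fin (m + 1)) (c : R) :
    (M + c • single i i 1).charpoly =
      M.charpoly - C c * (M.submatrix i.succAbove i.succAbove).charpoly := by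
  have hminor : (charmatrix M).submatrix i.succAbove i.succAbove =
      charmatrix (M.submatrix i.succAbove i.succAbove) := by
    ext a b
    simp [charmatrix_apply, diagonal_apply]
  rw [charpoly, charmatrix_add_smul_single_self, sub_eq_add_neg, det_updateRow_add, ← neg_smul,
    det_updateRow_smul, updateRow_eq_self, ← adjugate_apply, adjugate_fin_succ_eq_det_submatrix,
    hminor, Even.neg_one_pow ⟨(i : ℕ), rfl⟩]
  simp [charpoly, sub_eq_add_neg]

end Matrix

namespace Polynomial

variable {R : Type*} [CommRing R]

theorem Monic.wronskian_ne_zero_of_natDegree_eq_add_one [Nontrivial R] {p q : R[X]}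
    (hp : p.Monic) (hq : q.Monic) (hdeg : p.natDegree = q.natDegree + 1) :
    wronskian p q ≠ 0 := by
  have hsplit : wronskian p q = wronskian (p - X * q) q - q ^ 2 := by
    simp only [wronskian, derivative_sub, derivative_mul, derivative_X]; ring
  have hXq : (X * q).Monic := monic_X.mul hq
  have hlt : (wronskian (p - X * q) q).degree < (q ^ 2).degree := by
    rcases eq_or_ne (wronskian (p - X * q) q) 0 with h0 | h0
    · rw [h0, degree_zero, bot_lt_iff_ne_bot, degree_ne_bot]
      exact (hq.pow 2).ne_zero
    · have hr0 : p - X * q ≠ 0 := by rintro h; rw [h, wronskian_zero_left] at h0; exact h0 rfl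
      have hr : (p - X * q).natDegree < p.natDegree := by
        refine natDegree_lt_natDegree hr0 (degree_sub_lt_left ?_ hp.ne_zero (by rw [hp, hXq]))
        rw [degree_eq_natDegree hp.ne_zero, degree_eq_natDegree hXq.ne_zero,
          natDegree_X_mul hq.ne_zero, hdeg]
      apply degree_lt_degree
      rw [hq.natDegree_pow]
      have := natDegree_wronskian_lt_add h0
      omega
  rw [hsplit, ← degree_ne_bot, degree_sub_eq_right_of_degree_lt hlt, degree_ne_bot]
  exact (hq.pow 2).ne_zero

theorem finite_setOf_two_le_rootMultiplicity_sub_C_mul [IsDomain R] {p q : R[X]}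
    (hW : wronskian p q ≠ 0) (hq : ∀ z, q.rootMultiplicity z ≤ 1) :
    {c : R | ∃ z, 2 ≤ (p - C c * q).rootMultiplicity z}.Finite := by
  have hq0 : q ≠ 0 := by rintro rfl; exact hW (wronskian_zero_right p)
  refine ((finite_setOfPred_isRoot hW).biUnion fun z _ =>
    (Set.Subsingleton.finite (s := {c : R | p.eval z = c * q.eval z ∧
      (derivative p).eval z = c * (derivative q).eval z}) ?_)).subset ?_
  · rintro c ⟨h0, h1⟩ d ⟨h0', h1'⟩
    have hsimple := (one_lt_rootMultiplicity_iff_isRoot hq0 (t := z)).not.mp (hq z).not_gt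
    by_cases hz : q.eval z = 0
    · exact mul_right_cancel₀ (fun h => hsimple ⟨hz, h⟩) (h1.symm.trans h1')
    · exact mul_right_cancel₀ hz (h0.symm.trans h0')
  · rintro c ⟨z, hz⟩
    have hf : p - C c * q ≠ 0 := by rintro h; rw [h, rootMultiplicity_zero] at hz; omega
    obtain ⟨h0, h1⟩ := (one_lt_rootMultiplicity_iff_isRoot hf).mp hz
    simp only [IsRoot, eval_sub, eval_mul, eval_C, derivative_sub, derivative_mul, derivative_C,
      zero_mul, zero_add, sub_eq_zero] at h0 h1
    refine Set.mem_biUnion (x := z) ?_ ⟨h0, h1⟩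
    rw [Set.mem_ofPred_eq, IsRoot, wronskian, eval_sub, eval_mul, eval_mul, h0, h1]
    ring

end Polynomial

theorem stmt_4 (n : ℕ)
    (A : Matrix (Fin (n + 1)) (Fin (n + 1)) ℝ)
    (B : Matrix (Fin n) (Fin n) ℝ)
    (hB : B = A.submatrix Fin.castSucc Fin.castSucc)
    (hsimple : ((B.map (Complex.ofReal : ℝ → ℂ)).charpoly.roots.toFinset.card = n)) :
    {ε : ℝ | ∃ z : ℂ,
      2 ≤ (((A + ε • Matrix.single (Fin.last n) (Fin.last n) (1 : ℝ)).map
        (Complex.ofReal : ℝ → ℂ)).charpoly).rootMultiplicity z}.Finite := by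
  set p := (A.map Complex.ofReal).charpoly
  set q := (B.map Complex.ofReal).charpoly
  have hpencil : ∀ ε : ℝ, ((A + ε • single (Fin.last n) (Fin.last n) (1 : ℝ)).map
      Complex.ofReal).charpoly = p - C (ε : ℂ) * q := by
    intro ε
    have h := congrArg (Polynomial.map Complex.ofRealHom)
      (charpoly_add_smul_single_self A (Fin.last n) ε)
    rw [← charpoly_map, Fin.succAbove_last, ← hB] at h
    rwa [Polynomial.map_sub, Polynomial.map_mul, map_C, ← charpoly_map, ← charpoly_map] at h
  have hdeg : p.natDegree = q.natDegree + 1 := by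
    simp only [p, q, charpoly_natDegree_eq_dim, Fintype.card_fin]
  have hq : ∀ z, q.rootMultiplicity z ≤ 1 := by
    have hnodup : q.roots.Nodup := by
      rw [← Multiset.toFinset_card_eq_card_iff_nodup, hsimple,
        IsAlgClosed.card_roots_eq_natDegree, charpoly_natDegree_eq_dim, Fintype.card_fin]
    intro z
    rw [← count_roots]
    exact Multiset.nodup_iff_count_le_one.mp hnodup z
  have hfin := finite_setOf_two_le_rootMultiplicity_sub_C_mul
    ((charpoly_monic _).wronskian_ne_zero_of_natDegree_eq_add_one (charpoly_monic _) hdeg) hq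
  refine (hfin.preimage Complex.ofReal_injective.injOn).subset ?_
  rintro ε ⟨z, hz⟩
  exact ⟨z, hpencil ε ▸ hz⟩
end

section
/- Let p ∈ ℝ[X] be a polynomial of degree d = r + 2s with p(0) ≠ 0, whose number of real roots counted with multiplicity is exactly r (i.e. the multiset of real roots of p has cardinality r). Then there exist a nonzero real number α and a real symmetric d×d matrix A such that p(X) = α · det(J_{r+s,s} − X·A) in ℝ[X]. -/
/-!
Over `ℝ`, `p = c · ∏ᵢ (X - μᵢ) · ∏ⱼ (X² + bⱼ X + γⱼ²)` with `μᵢ ≠ 0` (as `p(0) ≠ 0`) and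
`γⱼ ≠ 0` (the quadratic factors come from conjugate pairs of non-real roots). Up to nonzero
scalars, `X - μ = -μ · det (1 - X μ⁻¹)` and
`X² + bX + γ² = -γ² · det (diag(1, -1) - X B)` with the symmetric `B = [[-b/γ², γ⁻¹], [γ⁻¹, 0]]`.
The block-diagonal sum of these `r` pencils of size 1 and `s` pencils of size 2 has `r + s`
diagonal entries `+1` and `s` entries `-1`; permuting the indices turns it into `J_{r+s,s}`.
-/

open Matrix Polynomial

section Pencil

variable {R : Type*} [CommRing R] {ι κ o : Type*} [Fintype ι] [DecidableEq ι]
  [Fintype κ] [DecidableEq κ] [Fintype o] [DecidableEq o]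

noncomputable def pencilDet (J : ι → R[X]) (A : Matrix ι ι R) : R[X] :=
  (diagonal J - (X : R[X]) • A.map C).det

theorem pencilDet_reindex (e : ι ≃ κ) (J : ι → R[X]) (A : Matrix ι ι R) :
    pencilDet (J ∘ e.symm) (reindex e e A) = pencilDet J A := by
  rw [pencilDet, pencilDet, ← det_reindex_self e]
  congr 1
  ext i j
  simp [diagonal_apply]

theorem pencilDet_fromBlocks (J₁ : ι → R[X]) (J₂ : κ → R[X]) (A : Matrix ι ι R)
    (B : Matrix κ κ R) :
    pencilDet (Sum.elim J₁ J₂) (fromBlocks A 0 0 B) = pencilDet J₁ A * pencilDet J₂ B := by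
  rw [pencilDet, ← fromBlocks_diagonal, fromBlocks_map, fromBlocks_smul, sub_eq_add_neg,
    fromBlocks_neg, fromBlocks_add]
  simp only [Matrix.map_zero _ (map_zero C), smul_zero, neg_zero, add_zero, ← sub_eq_add_neg]
  exact det_fromBlocks_zero₂₁ _ _ _

theorem pencilDet_blockDiagonal (J : ι → R[X]) (B : o → Matrix ι ι R) :
    pencilDet (J ∘ Prod.fst) (blockDiagonal B) = ∏ k, pencilDet J (B k) := by
  rw [pencilDet, show diagonal (J ∘ Prod.fst) = blockDiagonal fun _ : o => diagonal J from
    (blockDiagonal_diagonal fun _ => J).symm, blockDiagonal_map _ _ (map_zero C),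
    ← blockDiagonal_smul, ← blockDiagonal_sub, det_blockDiagonal]
  rfl

def IsSymmPencilDet (J : ι → R[X]) (q : R[X]) : Prop :=
  ∃ α : R, α ≠ 0 ∧ ∃ A : Matrix ι ι R, Aᵀ = A ∧ q = C α * pencilDet J A

namespace IsSymmPencilDet

variable {J : ι → R[X]} {q : R[X]}

theorem reindex (e : ι ≃ κ) {J' : κ → R[X]} (hJ : J' ∘ e = J) (h : IsSymmPencilDet J q) :
    IsSymmPencilDet J' q := by
  obtain ⟨α, hα, A, hA, rfl⟩ := h
  refine ⟨α, hα, Matrix.reindex e e A, by rw [transpose_reindex, hA], ?_⟩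
  rw [← hJ, ← pencilDet_reindex e, Function.comp_assoc, e.self_comp_symm, Function.comp_id]

variable [IsDomain R]

theorem C_mul {a : R} (ha : a ≠ 0) (h : IsSymmPencilDet J q) : IsSymmPencilDet J (C a * q) := by
  obtain ⟨α, hα, A, hA, rfl⟩ := h
  exact ⟨a * α, mul_ne_zero ha hα, A, hA, by rw [Polynomial.C_mul, mul_assoc]⟩

theorem mul {J' : κ → R[X]} {q' : R[X]} (h : IsSymmPencilDet J q) (h' : IsSymmPencilDet J' q') :
    IsSymmPencilDet (Sum.elim J J') (q * q') := by
  obtain ⟨α, hα, A, hA, rfl⟩ := h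
  obtain ⟨α', hα', A', hA', rfl⟩ := h'
  refine ⟨α * α', mul_ne_zero hα hα', fromBlocks A 0 0 A', ?_, ?_⟩
  · rw [fromBlocks_transpose, hA, hA', transpose_zero, transpose_zero]
  · rw [pencilDet_fromBlocks, Polynomial.C_mul]
    ring

theorem prod {q : o → R[X]} (h : ∀ k, IsSymmPencilDet J (q k)) :
    IsSymmPencilDet (J ∘ Prod.fst : ι × o → R[X]) (∏ k, q k) := by
  choose α hα A hA hq using h
  refine ⟨∏ k, α k, Finset.prod_ne_zero_iff.2 fun k _ => hα k, blockDiagonal A, ?_, ?_⟩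
  · rw [blockDiagonal_transpose, funext hA]
  · rw [pencilDet_blockDiagonal, map_prod, ← Finset.prod_mul_distrib]
    exact Finset.prod_congr rfl fun k _ => hq k

end IsSymmPencilDet

end Pencil

section Factors

variable {K : Type*} [Field K]

theorem isSymmPencilDet_X_sub_C {μ : K} (hμ : μ ≠ 0) :
    IsSymmPencilDet (fun _ : Unit => (1 : K[X])) (X - C μ) := by
  refine ⟨-μ, neg_ne_zero.2 hμ, of fun _ _ => μ⁻¹, rfl, ?_⟩
  have hC : C μ * C μ⁻¹ = 1 := by rw [← C_mul, mul_inv_cancel₀ hμ, C_1]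
  simp only [pencilDet, det_unique, Matrix.sub_apply, diagonal_apply_eq, Matrix.smul_apply,
    map_apply, of_apply, smul_eq_mul, map_neg]
  linear_combination (-X) * hC

theorem isSymmPencilDet_X_sq_add_C_mul_X_add_C_sq (b : K) {γ : K} (hγ : γ ≠ 0) :
    IsSymmPencilDet ![(1 : K[X]), -1] (X ^ 2 + C b * X + C (γ ^ 2)) := by
  refine ⟨-γ ^ 2, by simpa using hγ, !![-b / γ ^ 2, γ⁻¹; γ⁻¹, 0], ?_, ?_⟩
  · ext i j
    fin_cases i <;> fin_cases j <;> rfl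
  · have hγ' : C γ * C γ⁻¹ = 1 := by rw [← C_mul, mul_inv_cancel₀ hγ, C_1]
    have hb : C (-b / γ ^ 2) * C γ ^ 2 = -C b := by
      rw [← C_pow, ← C_mul, ← C_neg]
      congr 1
      field_simp
    have hpencil : diagonal ![(1 : K[X]), -1] - (X : K[X]) • (!![-b / γ ^ 2, γ⁻¹; γ⁻¹, 0]).map C =
        !![1 - X * C (-b / γ ^ 2), -(X * C γ⁻¹); -(X * C γ⁻¹), -1] := by
      ext i j
      fin_cases i <;> fin_cases j <;> simp
    rw [pencilDet, hpencil, det_fin_two_of, map_neg, map_pow]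
    linear_combination (-X ^ 2 * (C γ * C γ⁻¹ + 1)) * hγ' + X * hb

end Factors

theorem Polynomial.exists_quadratic_dvd_of_roots_eq_zero {q : ℝ[X]} (hdeg : 0 < q.natDegree)
    (hroots : q.roots = 0) :
    ∃ b γ : ℝ, γ ≠ 0 ∧ X ^ 2 + C b * X + C (γ ^ 2) ∣ q := by
  have hq : q ≠ 0 := ne_zero_of_natDegree_gt hdeg
  obtain ⟨z, hz⟩ : ∃ z : ℂ, aeval z q = 0 :=
    IsAlgClosed.exists_aeval_eq_zero _ q (natDegree_pos_iff_degree_pos.mp hdeg).ne'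
  have hzim : z.im ≠ 0 := by
    intro him
    lift z to ℝ using him with x
    have hx : x ∈ q.roots := by
      rwa [← Complex.coe_algebraMap, aeval_algebraMap_apply_eq_algebraMap_eval,
        FaithfulSMul.algebraMap_eq_zero_iff, ← IsRoot, ← mem_roots hq] at hz
    simp [hroots] at hx
  refine ⟨-(2 * z.re), ‖z‖, norm_ne_zero_iff.2 fun h => hzim (by simp [h]), ?_⟩
  simpa [sub_eq_add_neg] using q.quadratic_dvd_of_aeval_eq_zero_im_ne_zero hz hzim

theorem Polynomial.exists_eq_C_leadingCoeff_mul_prod_quadratic {s : ℕ} {q : ℝ[X]}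
    (hdeg : q.natDegree = 2 * s) (hroots : q.roots = 0) :
    ∃ b γ : Fin s → ℝ, (∀ j, γ j ≠ 0) ∧
      q = C q.leadingCoeff * ∏ j, (X ^ 2 + C (b j) * X + C (γ j ^ 2)) := by
  induction s generalizing q with
  | zero =>
    refine ⟨finZeroElim, finZeroElim, finZeroElim, ?_⟩
    rw [Fin.prod_univ_zero, mul_one, leadingCoeff, hdeg]
    exact eq_C_of_natDegree_eq_zero hdeg
  | succ n ih =>
    obtain ⟨b₀, γ₀, hγ₀, q', rfl⟩ := exists_quadratic_dvd_of_roots_eq_zero (by omega) hroots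
    have hQ : (X ^ 2 + C b₀ * X + C (γ₀ ^ 2) : ℝ[X]).Monic := by monicity!
    have hq' : q' ≠ 0 := by rintro rfl; simp at hdeg
    have hQdeg : (X ^ 2 + C b₀ * X + C (γ₀ ^ 2) : ℝ[X]).natDegree = 2 := by compute_degree!
    have hdeg' : q'.natDegree = 2 * n := by
      rw [natDegree_mul hQ.ne_zero hq', hQdeg] at hdeg
      omega
    have hroots' : q'.roots = 0 := by
      rw [roots_mul (mul_ne_zero hQ.ne_zero hq')] at hroots
      exact (add_eq_zero.1 hroots).2
    obtain ⟨b, γ, hγ, hq'_eq⟩ := ih hdeg' hroots'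
    refine ⟨Fin.cons b₀ b, Fin.cons γ₀ γ, Fin.cases hγ₀ hγ, ?_⟩
    rw [Fin.prod_univ_succ, leadingCoeff_mul, hQ.leadingCoeff, one_mul]
    simp only [Fin.cons_zero, Fin.cons_succ]
    conv_lhs => rw [hq'_eq]
    ring

def signatureEquiv {ι : Type*} {r : ℕ} (e : ι ≃ Fin r) (s : ℕ) :
    ι ⊕ Fin 2 × Fin s ≃ Fin (r + 2 * s) :=
  (e.sumCongr ((finTwoEquiv.prodCongr (Equiv.refl _)).trans (Equiv.boolProdEquivSum _))).trans <|
    (Equiv.sumAssoc _ _ _).symm.trans <|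
      (finSumFinEquiv.sumCongr (Equiv.refl _)).trans <| finSumFinEquiv.trans (finCongr (by ring))

theorem ite_lt_comp_signatureEquiv {ι M : Type*} {r : ℕ} (e : ι ≃ Fin r) (s : ℕ) (a b : M) :
    (fun i : Fin (r + 2 * s) => if (i : ℕ) < r + s then a else b) ∘ signatureEquiv e s =
      Sum.elim (fun _ => a) (![a, b] ∘ Prod.fst) := by
  funext x
  rcases x with i | ⟨k, j⟩
  · simp [signatureEquiv]
    omega
  · fin_cases k <;> simp [signatureEquiv, finTwoEquiv, Equiv.boolProdEquivSum]

theorem stmt_8 (r s : ℕ) (p : Polynomial ℝ)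
    (hdeg : p.natDegree = r + 2 * s) (hp0 : p.eval 0 ≠ 0)
    (hroots : p.roots.card = r) :
    ∃ (α : ℝ) (A : Matrix (Fin (r + 2 * s)) (Fin (r + 2 * s)) ℝ),
      α ≠ 0 ∧ Aᵀ = A ∧
      p = C α *
        ((Matrix.diagonal fun i : Fin (r + 2 * s) =>
            if (i : ℕ) < r + s then (1 : Polynomial ℝ) else -1) -
          (X : Polynomial ℝ) • A.map (C : ℝ → Polynomial ℝ)).det := by
  classical
  have hp : p ≠ 0 := fun h => hp0 (by simp [h])
  obtain ⟨q, hpq, hqdeg, hqroots⟩ := p.exists_prod_multiset_X_sub_C_mul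
  have hq : q ≠ 0 := by rintro rfl; exact hp (by simpa using hpq.symm)
  obtain ⟨b, γ, hγ, hq_eq⟩ :=
    exists_eq_C_leadingCoeff_mul_prod_quadratic (s := s) (by omega) hqroots
  have hlin : IsSymmPencilDet ((fun _ => 1) ∘ Prod.fst : Unit × p.roots → ℝ[X])
      (∏ x : p.roots, (X - C (x : ℝ))) :=
    .prod fun x => isSymmPencilDet_X_sub_C fun h0 => hp0 <| by
      simpa [h0] using isRoot_of_mem_roots (Multiset.coe_mem (x := x))
  have hquad : IsSymmPencilDet (![1, -1] ∘ Prod.fst : Fin 2 × Fin s → ℝ[X])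
      (∏ j, (X ^ 2 + C (b j) * X + C (γ j ^ 2))) :=
    .prod fun j => isSymmPencilDet_X_sq_add_C_mul_X_add_C_sq _ (hγ j)
  have hcard : Fintype.card (Unit × p.roots) = r := by simp [hroots]
  obtain ⟨α, hα, A, hA, hpA⟩ := ((hlin.mul hquad).C_mul (leadingCoeff_ne_zero.2 hq)).reindex
    (signatureEquiv (Fintype.equivFinOfCardEq hcard) s) (ite_lt_comp_signatureEquiv _ s 1 (-1))
  refine ⟨α, A, hα, hA, ?_⟩
  have hlin_prod : (p.roots.map fun a => X - C a).prod = ∏ x : p.roots, (X - C (x : ℝ)) := by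
    rw [Finset.prod_eq_multiset_prod, Multiset.map_univ (f := fun a => X - C a)]
  rw [← pencilDet, ← hpA, ← hlin_prod]
  linear_combination -hpq + (p.roots.map fun a => X - C a).prod * hq_eq
end

section
/- Let r and s be natural numbers, d = r + 2s, and let A be a real symmetric d×d matrix. Then the polynomial p(X) = det(X·J_{r+s,s} − A) ∈ ℝ[X] has at least r real roots counted with multiplicity (i.e. the multiset of real roots of p has cardinality at least r). -/
/-!
Put `J = J_{r+s,s}`. Since `J² = 1`, `det (X J - A) = det J · charpoly (J A)`, and `M = J A` is
self-adjoint for the indefinite Hermitian form `[x, y] = y* J x` on `ℂ^d` because `A` is real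
symmetric. For such an `M`, generalized eigenspaces for eigenvalues `μ, ν` with `μ ≠ conj ν`
are `[·,·]`-orthogonal, so the sum of the generalized eigenspaces for the eigenvalues in the
upper half-plane is a neutral subspace. A neutral subspace meets the positive-definite coordinate
subspace `{x | x_i = 0 for i ≥ r + s}` trivially, hence has dimension at most `s`. The non-real
roots of the real polynomial `charpoly M` come in conjugate pairs, so there are at most `2s` of
them, and at least `r` of its `r + 2s` complex roots are real.
-/

open Matrix Polynomial Module

namespace Module.End

variable {K V : Type*} [Field K] [AddCommGroup V] [Module K V] [FiniteDimensional K V]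

theorem maxGenEigenspace_le_range_pow_sub_smul (f : End K V) {μ c : K} (hμc : μ ≠ c)
    (N : ℕ) : f.maxGenEigenspace μ ≤ LinearMap.range ((f - c • 1) ^ N) := by
  have hmaps :
      ∀ x ∈ f.maxGenEigenspace μ, (f - c • 1 : End K V) x ∈ f.maxGenEigenspace μ :=
    fun x hx => mapsTo_maxGenEigenspace_of_comm
      ((Commute.refl f).sub_right ((Commute.one_right f).smul_right c)) μ hx
  have hunit : IsUnit ((f - c • 1).restrict hmaps) := by
    rw [LinearMap.isUnit_iff_ker_eq_bot, eq_bot_iff]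
    rintro ⟨x, hx⟩ hker
    have hxc : x ∈ f.genEigenspace c 1 := by
      rw [mem_genEigenspace_one, ← sub_eq_zero]
      exact congrArg Subtype.val (LinearMap.mem_ker.mp hker)
    exact Subtype.ext (Submodule.disjoint_def.mp (f.disjoint_genEigenspace hμc ⊤ 1) x hx hxc)
  intro x hx
  obtain ⟨w, hw⟩ := ((isUnit_iff _).mp (hunit.pow N)).2 ⟨x, hx⟩
  rw [pow_restrict] at hw
  exact ⟨w, congrArg Subtype.val hw⟩

end Module.End

theorem iSupIndep.finrank_biSup_eq_sum {K V ι : Type*} [DivisionRing K] [AddCommGroup V]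
    [Module K V] [FiniteDimensional K V] [DecidableEq ι] {p : ι → Submodule K V}
    (hp : iSupIndep p) (t : Finset ι) :
    finrank K ↥(⨆ i ∈ t, p i) = ∑ i ∈ t, finrank K (p i) := by
  induction t using Finset.induction_on with
  | empty => simp
  | insert a t ha ih =>
    have hdisj : Disjoint (p a) (⨆ i ∈ t, p i) :=
      (hp a).mono_right <| iSup₂_le fun i hi =>
        le_iSup₂_of_le i (ne_of_mem_of_not_mem hi ha) le_rfl
    have := Submodule.finrank_sup_add_finrank_inf_eq (p a) (⨆ i ∈ t, p i)
    rw [hdisj.eq_bot, finrank_bot, add_zero] at this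
    rw [Finset.sum_insert ha, ← ih, Finset.iSup_insert, this]

section SesquilinearForm

variable {K V : Type*} [CommRing K] [StarRing K] [AddCommGroup V] [Module K V]
  {B : V →ₗ[K] V →ₗ⋆[K] K}

namespace LinearMap.IsAdjointPair

variable {f g : Module.End K V}

theorem sub_smul_one (h : IsAdjointPair B B f g) (c : K) :
    IsAdjointPair B B ⇑(f - c • 1) ⇑(g - star c • 1) := fun x y => by
  simp [h x y, starRingEnd_apply]

theorem pow (h : IsAdjointPair B B f g) (N : ℕ) : IsAdjointPair B B ⇑(f ^ N) ⇑(g ^ N) := by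
  induction N with
  | zero => exact isAdjointPair_one
  | succ N ih => rw [pow_succ, pow_succ']; exact ih.mul h

end LinearMap.IsAdjointPair

theorem LinearMap.apply_eq_zero_of_mem_biSup {ι : Type*} {p : ι → Submodule K V} {s : Set ι}
    (hp : ∀ i ∈ s, ∀ j ∈ s, ∀ x ∈ p i, ∀ y ∈ p j, B x y = 0) {x y : V}
    (hx : x ∈ ⨆ i ∈ s, p i) (hy : y ∈ ⨆ j ∈ s, p j) : B x y = 0 := by
  have hpW : ∀ i ∈ s, ∀ x ∈ p i, (⨆ j ∈ s, p j) ≤ ker (B x) := fun i hi x hx =>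
    iSup₂_le fun j hj y hy => hp i hi j hj x hx y hy
  have hWW : (⨆ i ∈ s, p i) ≤ ker (B.flip y) :=
    iSup₂_le fun i hi x hx => hpW i hi x hx hy
  exact hWW hx

end SesquilinearForm

theorem LinearMap.IsAdjointPair.apply_eq_zero_of_mem_maxGenEigenspace {K V : Type*}
    [Field K] [StarRing K] [AddCommGroup V] [Module K V] [FiniteDimensional K V]
    {B : V →ₗ[K] V →ₗ⋆[K] K} {f : Module.End K V} (hf : IsAdjointPair B B f f) {μ ν : K}
    (hμν : μ ≠ star ν) {x y : V}
    (hx : x ∈ f.maxGenEigenspace μ) (hy : y ∈ f.maxGenEigenspace ν) : B x y = 0 := by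
  obtain ⟨N, hN⟩ := (Module.End.mem_maxGenEigenspace _ _ _).mp hy
  -- `x = (f - conj ν)^N w`, and across `B` this factor becomes `(f - ν)^N`, which kills `y`.
  obtain ⟨w, rfl⟩ := f.maxGenEigenspace_le_range_pow_sub_smul hμν N hx
  rw [(hf.sub_smul_one (star ν)).pow N, star_star, hN, map_zero]

theorem LinearMap.IsAdjointPair.card_roots_charpoly_filter_im_pos_le {V : Type*}
    [AddCommGroup V] [Module ℂ V] [FiniteDimensional ℂ V]
    {B : V →ₗ[ℂ] V →ₗ⋆[ℂ] ℂ} {f : Module.End ℂ V} (hf : IsAdjointPair B B f f) {k : ℕ}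
    (hB : ∀ W : Submodule ℂ V, (∀ w ∈ W, B w w = 0) → finrank ℂ W ≤ k) :
    (f.charpoly.roots.filter (fun z => 0 < z.im)).card ≤ k := by
  set R := f.charpoly.roots.filter (fun z => 0 < z.im)
  have him : ∀ μ ∈ R.toFinset, 0 < μ.im := fun μ hμ =>
    (Multiset.mem_filter.mp (Multiset.mem_toFinset.mp hμ)).2
  have hneutral : ∀ w ∈ ⨆ μ ∈ R.toFinset, f.maxGenEigenspace μ, B w w = 0 := fun w hw =>
    apply_eq_zero_of_mem_biSup (fun μ hμ ν hν x hx y hy =>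
      hf.apply_eq_zero_of_mem_maxGenEigenspace
        (fun h => by have := congrArg Complex.im h; simp at this; linarith [him μ hμ, him ν hν])
        hx hy) hw hw
  calc R.card = ∑ μ ∈ R.toFinset, R.count μ := (Multiset.toFinset_sum_count_eq R).symm
    _ = ∑ μ ∈ R.toFinset, finrank ℂ (f.maxGenEigenspace μ) :=
        Finset.sum_congr rfl fun μ hμ => by
          rw [Multiset.count_filter_of_pos (p := fun z : ℂ => 0 < z.im) (him μ hμ), count_roots,
            LinearMap.finrank_maxGenEigenspace_eq]
    _ = finrank ℂ ↥(⨆ μ ∈ R.toFinset, f.maxGenEigenspace μ) :=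
        (f.independent_maxGenEigenspace.finrank_biSup_eq_sum _).symm
    _ ≤ k := hB _ hneutral

namespace Polynomial

theorem roots_map_ofReal_filter_im_eq_zero (p : ℝ[X]) :
    (p.map (algebraMap ℝ ℂ)).roots.filter (fun z => z.im = 0) = p.roots.map (↑) := by
  ext z
  by_cases hz : z.im = 0
  · obtain ⟨x, rfl⟩ : ∃ x : ℝ, (x : ℂ) = z := ⟨z.re, Complex.ext rfl hz.symm⟩
    rw [Multiset.count_filter_of_pos (p := fun z : ℂ => z.im = 0) hz, count_roots,
      Multiset.count_map_eq_count' _ _ Complex.ofReal_injective, count_roots,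
      eq_rootMultiplicity_map (algebraMap ℝ ℂ).injective]
    rfl
  · rw [Multiset.count_filter_of_neg (p := fun z : ℂ => z.im = 0) hz, eq_comm,
      Multiset.count_eq_zero]
    rintro hmem
    obtain ⟨x, -, rfl⟩ := Multiset.mem_map.mp hmem
    exact hz (Complex.ofReal_im x)

theorem card_roots_map_ofReal_filter_im_neg (p : ℝ[X]) :
    ((p.map (algebraMap ℝ ℂ)).roots.filter (fun z => z.im < 0)).card =
      ((p.map (algebraMap ℝ ℂ)).roots.filter (fun z => 0 < z.im)).card := by
  set R := (p.map (algebraMap ℝ ℂ)).roots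
  have hconj : R.map (starRingEnd ℂ) = R := by
    rw [← (IsAlgClosed.splits _).roots_map, Polynomial.map_map]
    congr 2
    exact RingHom.ext Complex.conj_ofReal
  conv_lhs => rw [← hconj, Multiset.filter_map, Multiset.card_map]
  congr 2
  ext z
  simp

theorem card_roots_map_ofReal (p : ℝ[X]) :
    (p.map (algebraMap ℝ ℂ)).roots.card =
      p.roots.card + 2 * ((p.map (algebraMap ℝ ℂ)).roots.filter (fun z => 0 < z.im)).card := by
  set R := (p.map (algebraMap ℝ ℂ)).roots
  have hsplit : R.filter (fun z => z.im ≠ 0) =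
      R.filter (fun z => 0 < z.im) + R.filter (fun z => z.im < 0) := by
    rw [Multiset.filter_add_filter,
      (Multiset.filter_eq_nil (p := fun z : ℂ => 0 < z.im ∧ z.im < 0)).mpr
        fun z _ h => h.1.not_gt h.2,
      add_zero]
    exact Multiset.filter_congr fun z _ => by rw [ne_comm, ne_iff_lt_or_gt]
  calc R.card = (R.filter (fun z => z.im = 0)).card + (R.filter (fun z => z.im ≠ 0)).card := by
        rw [← Multiset.card_add, Multiset.filter_add_not]
    _ = _ := by
        rw [roots_map_ofReal_filter_im_eq_zero, Multiset.card_map, hsplit, Multiset.card_add,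
          card_roots_map_ofReal_filter_im_neg]
        ring

end Polynomial

namespace Matrix

section Signature

variable {n : Type*} [DecidableEq n] (p : n → Prop) [DecidablePred p]

def signature (R : Type*) [Zero R] [One R] [Neg R] : Matrix n n R :=
  diagonal fun i => if p i then 1 else -1

theorem signature_mul_self [Fintype n] (R : Type*) [Ring R] :
    signature p R * signature p R = 1 := by
  rw [signature, diagonal_mul_diagonal, ← diagonal_one]
  congr 1
  ext i
  split_ifs <;> simp

theorem signature_map {R S : Type*} [Ring R] [Ring S] (f : R →+* S) :
    (signature p R).map f = signature p S := by
  rw [signature, diagonal_map (map_zero f)]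
  congr 1
  ext i
  split_ifs <;> simp

theorem conjTranspose_signature (R : Type*) [Ring R] [StarRing R] :
    (signature p R)ᴴ = signature p R := by
  rw [signature, diagonal_conjTranspose]
  congr 1
  ext i
  split_ifs <;> simp [*]

end Signature

section SesqForm

variable {n K : Type*} [Fintype n] [CommRing K] [StarRing K]

/-- `[x, y] = y* J x`: linear in `x` and conjugate-linear in `y`, the convention of
`LinearMap.IsAdjointPair`. -/
def sesqForm (J : Matrix n n K) : (n → K) →ₗ[K] (n → K) →ₗ⋆[K] K :=
  LinearMap.mk₂'ₛₗ (RingHom.id K) (starRingEnd K) (fun x y => star y ⬝ᵥ (J *ᵥ x))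
    (fun _ _ _ => by simp [mulVec_add, dotProduct_add])
    (fun _ _ _ => by simp [mulVec_smul, dotProduct_smul])
    (fun _ _ _ => by simp [star_add, add_dotProduct])
    (fun _ _ _ => by simp [star_smul, smul_dotProduct, starRingEnd_apply])

theorem sesqForm_apply (J : Matrix n n K) (x y : n → K) :
    J.sesqForm x y = star y ⬝ᵥ (J *ᵥ x) :=
  rfl

theorem isAdjointPair_sesqForm_mulVecLin {J P Q : Matrix n n K} (h : Qᴴ * J = J * P) :
    LinearMap.IsAdjointPair J.sesqForm J.sesqForm P.mulVecLin Q.mulVecLin := fun x y => by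
  simp only [sesqForm_apply, mulVecLin_apply, star_mulVec, ← dotProduct_mulVec, mulVec_mulVec, h]

end SesqForm

theorem finrank_le_card_of_sesqForm_signature_self_eq_zero {n K : Type*} [Fintype n]
    [DecidableEq n] [Field K] [StarRing K] [PartialOrder K] [StarOrderedRing K]
    (p : n → Prop) [DecidablePred p] (W : Submodule K (n → K))
    (hW : ∀ w ∈ W, (signature p K).sesqForm w w = 0) :
    finrank K W ≤ Fintype.card {i // ¬ p i} := by
  let restrict : (n → K) →ₗ[K] ({i // ¬ p i} → K) := LinearMap.funLeft K K Subtype.val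
  have hinj : Function.Injective (restrict ∘ₗ W.subtype) := by
    rw [← LinearMap.ker_eq_bot, eq_bot_iff]
    rintro ⟨w, hw⟩ hker
    have hvanish : ∀ i, ¬ p i → w i = 0 := fun i hi => congrFun hker ⟨i, hi⟩
    have hfix : signature p K *ᵥ w = w := by
      ext i
      by_cases hi : p i <;> simp [signature, mulVec_diagonal, hi, hvanish]
    have hself : star w ⬝ᵥ w = 0 := by simpa [sesqForm_apply, hfix] using hW w hw
    simpa using dotProduct_star_self_eq_zero.mp hself
  simpa using LinearMap.finrank_le_finrank_of_injective hinj

theorem det_X_smul_sub_of_mul_self_eq_one {R : Type*} [CommRing R] {n : Type*} [Fintype n]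
    [DecidableEq n] {J : Matrix n n R} (hJ : J * J = 1) (A : Matrix n n R) :
    ((X : R[X]) • J.map C - A.map C).det = C J.det * (J * A).charpoly := by
  have hfactor : J.map C * charmatrix (J * A) = (X : R[X]) • J.map C - A.map C := by
    rw [charmatrix, RingHom.mapMatrix_apply, mul_sub,
      (scalar_commute (X : R[X]) (fun r' => mul_comm _ r') (J.map C)).eq.symm,
      scalar_apply, ← smul_eq_diagonal_mul, ← Matrix.map_mul, ← mul_assoc, hJ, one_mul]
  rw [← hfactor, det_mul, ← RingHom.mapMatrix_apply, ← RingHom.map_det, Matrix.charpoly]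

open scoped ComplexOrder in
theorem card_roots_charpoly_filter_im_pos_le_of_conjTranspose_mul_signature
    {n : Type*} [Fintype n] [DecidableEq n] {p : n → Prop} [DecidablePred p]
    {M : Matrix n n ℂ} (hM : Mᴴ * signature p ℂ = signature p ℂ * M) :
    (M.charpoly.roots.filter (fun z => 0 < z.im)).card ≤ Fintype.card {i // ¬ p i} := by
  rw [← charpoly_mulVecLin]
  exact (isAdjointPair_sesqForm_mulVecLin hM).card_roots_charpoly_filter_im_pos_le
    (finrank_le_card_of_sesqForm_signature_self_eq_zero p)

theorem card_le_card_roots_charpoly_signature_mul {n : Type*} [Fintype n] [DecidableEq n]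
    (p : n → Prop) [DecidablePred p] {A : Matrix n n ℝ} (hA : Aᵀ = A) :
    Fintype.card n ≤
      (signature p ℝ * A).charpoly.roots.card + 2 * Fintype.card {i // ¬ p i} := by
  set M := (signature p ℝ * A).map (algebraMap ℝ ℂ) with hMdef
  have hAc : (A.map (algebraMap ℝ ℂ))ᴴ = A.map (algebraMap ℝ ℂ) := by
    rw [← conjTranspose_map _ (fun x => by simp), conjTranspose_eq_transpose_of_trivial, hA]
  have hadj : Mᴴ * signature p ℂ = signature p ℂ * M := by
    rw [hMdef, Matrix.map_mul, signature_map, conjTranspose_mul, hAc, conjTranspose_signature,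
      mul_assoc, signature_mul_self, ← mul_assoc, signature_mul_self, mul_one, one_mul]
  have hcount := card_roots_map_ofReal (signature p ℝ * A).charpoly
  rw [← charpoly_map, ← hMdef, IsAlgClosed.card_roots_eq_natDegree,
    charpoly_natDegree_eq_dim] at hcount
  have hupper := card_roots_charpoly_filter_im_pos_le_of_conjTranspose_mul_signature hadj
  omega

end Matrix

theorem stmt_9 (r s : ℕ) (A : Matrix (Fin (r + 2 * s)) (Fin (r + 2 * s)) ℝ)
    (hA : Aᵀ = A) :
    r ≤ ((X : Polynomial ℝ) •
        (Matrix.diagonal fun i : Fin (r + 2 * s) =>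
          if (i : ℕ) < r + s then (1 : Polynomial ℝ) else -1) -
        A.map (C : ℝ → Polynomial ℝ)).det.roots.card := by
  let p : Fin (r + 2 * s) → Prop := fun i => (i : ℕ) < r + s
  have hJJ := signature_mul_self p ℝ
  have hdetJ : (signature p ℝ).det ≠ 0 :=
    left_ne_zero_of_mul_eq_one (by rw [← det_mul, hJJ, det_one])
  rw [show diagonal _ = (signature p ℝ).map C from (signature_map p C).symm,
    det_X_smul_sub_of_mul_self_eq_one hJJ, roots_C_mul _ hdetJ]
  have hcount := card_le_card_roots_charpoly_signature_mul p hA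
  rw [Fintype.card_fin, Fintype.card_subtype_compl, Fintype.card_fin_lt_of_le (by omega),
    Fintype.card_fin] at hcount
  omega
end

section
/- Let r ≥ 1 and s be natural numbers, and let μ₁,…,μ_s, ν₁,…,ν_s, k₁,…,k_s, l₁,…,l_s, λ₁,…,λ_{r−1}, h₁,…,h_{r−1}, e be real numbers. Let J be the (r+2s)×(r+2s) block-diagonal matrix consisting of s copies of diag(1, −1) followed by the r×r identity, and let A be the (r+2s)×(r+2s) symmetric arrow matrix whose first 2s×2s diagonal part consists of the blocks [[μⱼ, νⱼ],[νⱼ, −μⱼ]], followed by the diagonal entries λ₁,…,λ_{r−1}, whose last column (and last row, by symmetry) above the corner is (k₁, l₁, …, k_s, l_s, h₁, …, h_{r−1}), whose bottom-right entry is e, and whose other entries are 0. Set u(X) = ∏_{i=1}^{r−1}(X − λᵢ), uᵢ(X) = ∏_{i'≠i}(X − λ_{i'}), v(X) = ∏_{j=1}^{s}(−(X − μⱼ)² − νⱼ²), and vⱼ(X) = ∏_{j'≠j}(−(X − μ_{j'})² − ν_{j'}²). Then det(X·J − A) = (X − e)·u(X)·v(X) − v(X)·Σ_{i=1}^{r−1}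 hᵢ²·uᵢ(X) − u(X)·Σ_{j=1}^{s}((μⱼ − X)·kⱼ² + 2·νⱼ·kⱼ·lⱼ + (X − μⱼ)·lⱼ²)·vⱼ(X) in ℝ[X]. -/
/-!
Both `J` and `A` are arrow matrices, hence so is the pencil `X • J - A`: its blocks are
`!![X - μ, -ν; -ν, μ - X]`, whose determinant is `-(X - μ)² - ν²`, and its diagonal entries are
`X - λᵢ`. Expanding the determinant along the Schur complement of the block-diagonal part gives
`det B * (c - wᵀ B⁻¹ w)`, and `B⁻¹` is computed block by block as `adj / det`. Clearing
denominators yields an identity valid over any domain as soon as the blocks have nonzero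
determinant and the diagonal entries are nonzero, which holds in `ℝ[X]` since all of them are monic
up to sign.
-/

open Matrix Polynomial

namespace Matrix

variable {R : Type*} [CommRing R] {m α β : Type*} [DecidableEq α] [DecidableEq β]

theorem det_fromBlocks_replicateCol_replicateRow_s16 {n : Type*} [Fintype n] [DecidableEq n]
    (B : Matrix n n R) (hB : IsUnit B.det) (x y : n → R) (c : R) :
    (fromBlocks B (replicateCol (Fin 1) x) (replicateRow (Fin 1) y) (of fun _ _ => c)).det
      = B.det * (c - y ⬝ᵥ B⁻¹ *ᵥ x) := by
  let := B.invertibleOfIsUnitDet hB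
  rw [det_fromBlocks₁₁, invOf_eq_nonsing_inv, det_unique (n := Fin 1), sub_apply,
    Matrix.mul_assoc, ← replicateCol_mulVec, replicateRow_mul_replicateCol_apply, of_apply]

theorem dotProduct_fromBlocks_blockDiagonal_diagonal_mulVec [Fintype m] [Fintype α] [Fintype β]
    (D : α → Matrix m m R) (d : β → R) (x y : (m × α) ⊕ β → R) :
    y ⬝ᵥ fromBlocks (blockDiagonal D) 0 0 (diagonal d) *ᵥ x
      = ∑ a, (fun i => y (.inl (i, a))) ⬝ᵥ D a *ᵥ (fun i => x (.inl (i, a)))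
        + ∑ b, y (.inr b) * d b * x (.inr b) := by
  simp [dotProduct, mulVec, Fintype.sum_sum_type, Fintype.sum_prod_type_right,
    blockDiagonal_apply, diagonal_apply, mul_assoc]

def arrowMatrix (D : α → Matrix m m R) (d : β → R) (x y : (m × α) ⊕ β → R) (c : R) :
    Matrix (((m × α) ⊕ β) ⊕ Fin 1) (((m × α) ⊕ β) ⊕ Fin 1) R :=
  fromBlocks (fromBlocks (blockDiagonal D) 0 0 (diagonal d))
    (replicateCol (Fin 1) x) (replicateRow (Fin 1) y) (of fun _ _ => c)

theorem arrowMatrix_map {S : Type*} [CommRing S] (f : R →+* S) (D : α → Matrix m m R)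
    (d : β → R) (x y : (m × α) ⊕ β → R) (c : R) :
    (arrowMatrix D d x y c).map f
      = arrowMatrix (fun a => (D a).map f) (f ∘ d) (f ∘ x) (f ∘ y) (f c) := by
  simp only [arrowMatrix, fromBlocks_map, blockDiagonal_map _ _ f.map_zero,
    diagonal_map f.map_zero, Matrix.map_zero _ f.map_zero]
  rfl

section Det

variable [Fintype m] [DecidableEq m] [Fintype α] [Fintype β]

theorem det_arrowMatrix_of_field {K : Type*} [Field K] (D : α → Matrix m m K) (d : β → K)
    (x y : (m × α) ⊕ β → K) (c : K) (hD : ∀ a, (D a).det ≠ 0) (hd : ∀ b, d b ≠ 0) :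
    (arrowMatrix D d x y c).det
      = c * (∏ a, (D a).det) * ∏ b, d b
        - (∏ a, (D a).det) * ∑ b, y (.inr b) * x (.inr b) * ∏ b' ∈ Finset.univ.erase b, d b'
        - (∏ b, d b) * ∑ a, (fun i => y (.inl (i, a))) ⬝ᵥ adjugate (D a) *ᵥ
            (fun i => x (.inl (i, a))) * ∏ a' ∈ Finset.univ.erase a, (D a').det := by
  set B := fromBlocks (blockDiagonal D) 0 0 (diagonal d)
  have hdetB : B.det = (∏ a, (D a).det) * ∏ b, d b := by
    rw [det_fromBlocks_zero₂₁, det_blockDiagonal, det_diagonal]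
  have hB : IsUnit B.det := by
    rw [hdetB]
    exact (mul_ne_zero (Finset.prod_ne_zero_iff.2 fun a _ => hD a)
      (Finset.prod_ne_zero_iff.2 fun b _ => hd b)).isUnit
  have hBinv : B⁻¹
      = fromBlocks (blockDiagonal fun a => (D a)⁻¹) 0 0 (diagonal fun b => (d b)⁻¹) := by
    refine inv_eq_right_inv ?_
    rw [fromBlocks_multiply, ← blockDiagonal_mul, diagonal_mul_diagonal]
    simp [mul_nonsing_inv, hD, hd, ← fromBlocks_one]
    exact blockDiagonal_one
  have hprodD (a : α) :
      (∏ a', (D a').det) * (D a).det⁻¹ = ∏ a' ∈ Finset.univ.erase a, (D a').det := by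
    rw [← Finset.mul_prod_erase _ _ (Finset.mem_univ a), mul_comm, inv_mul_cancel_left₀ (hD a)]
  have hprodd (b : β) : (∏ b', d b') * (d b)⁻¹ = ∏ b' ∈ Finset.univ.erase b, d b' := by
    rw [← Finset.mul_prod_erase _ _ (Finset.mem_univ b), mul_comm, inv_mul_cancel_left₀ (hd b)]
  rw [arrowMatrix, det_fromBlocks_replicateCol_replicateRow_s16 B hB, hBinv,
    dotProduct_fromBlocks_blockDiagonal_diagonal_mulVec, hdetB]
  simp only [inv_def, Ring.inverse_eq_inv', smul_mulVec, dotProduct_smul, smul_eq_mul]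
  rw [mul_sub, mul_add, Finset.mul_sum, Finset.mul_sum, Finset.mul_sum, Finset.mul_sum]
  simp only [← hprodD, ← hprodd]
  rw [sub_sub, add_comm]
  congr 1
  · ring
  · congr 1 <;> exact Finset.sum_congr rfl fun _ _ => by ring

theorem det_arrowMatrix [IsDomain R] (D : α → Matrix m m R) (d : β → R)
    (x y : (m × α) ⊕ β → R) (c : R) (hD : ∀ a, (D a).det ≠ 0) (hd : ∀ b, d b ≠ 0) :
    (arrowMatrix D d x y c).det
      = c * (∏ a, (D a).det) * ∏ b, d b
        - (∏ a, (D a).det) * ∑ b, y (.inr b) * x (.inr b) * ∏ b' ∈ Finset.univ.erase b, d b'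
        - (∏ b, d b) * ∑ a, (fun i => y (.inl (i, a))) ⬝ᵥ adjugate (D a) *ᵥ
            (fun i => x (.inl (i, a))) * ∏ a' ∈ Finset.univ.erase a, (D a').det := by
  let f := algebraMap R (FractionRing R)
  have hf : Function.Injective f := IsFractionRing.injective R (FractionRing R)
  have hDf (a : α) : ((D a).map f).det ≠ 0 := by
    rw [← RingHom.mapMatrix_apply, ← RingHom.map_det]
    exact (map_ne_zero_iff f hf).2 (hD a)
  have hdf (b : β) : (f ∘ d) b ≠ 0 := (map_ne_zero_iff f hf).2 (hd b)
  have hmulVec (M : Matrix m m R) (v : m → R) : f ∘ (M *ᵥ v) = M.map f *ᵥ (f ∘ v) :=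
    funext (RingHom.map_mulVec f M v)
  have hadj (M : Matrix m m R) : M.adjugate.map f = (M.map f).adjugate :=
    RingHom.map_adjugate f M
  apply hf
  rw [RingHom.map_det, RingHom.mapMatrix_apply, arrowMatrix_map,
    det_arrowMatrix_of_field _ _ _ _ _ hDf hdf]
  simp only [map_sub, map_mul, map_sum, map_prod, RingHom.map_det, RingHom.mapMatrix_apply,
    RingHom.map_dotProduct, hmulVec, hadj, Function.comp_def]

end Det

end Matrix

theorem Polynomial.neg_sq_X_sub_C_sub_C_sq_ne_zero {R : Type*} [CommRing R] [Nontrivial R]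
    (a b : R) : -(X - C a) ^ 2 - C b ^ 2 ≠ 0 := by
  have hmonic : ((X - C a) ^ 2 + C b ^ 2).Monic := by monicity!
  rw [← neg_add', neg_ne_zero]
  exact hmonic.ne_zero

theorem X_smul_map_sub_map_arrowMatrix {R α β : Type*} [CommRing R] [DecidableEq α]
    [DecidableEq β] (μ ν : α → R) (lam : β → R) (w : (Fin 2 × α) ⊕ β → R) (e : R) :
    (X : R[X]) • (arrowMatrix (fun _ => !![(1 : R), 0; 0, -1]) 1 0 0 1).map C
        - (arrowMatrix (fun a => !![μ a, ν a; ν a, -μ a]) lam w w e).map C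
      = arrowMatrix (fun a => !![X - C (μ a), -C (ν a); -C (ν a), C (μ a) - X])
          (fun b => X - C (lam b)) (fun i => -C (w i)) (fun i => -C (w i)) (X - C e) := by
  refine Matrix.ext fun i j => ?_
  rcases i with ((⟨i, a⟩ | b) | _) <;> rcases j with ((⟨j, a'⟩ | b') | _) <;>
    simp [arrowMatrix, blockDiagonal_apply, diagonal_apply, one_apply, Fin.fin_one_eq_zero]
  · split_ifs
    · fin_cases i <;> fin_cases j <;> simp [neg_add_eq_sub]
    · simp
  · split_ifs <;> simp

theorem stmt_16_general (r s : ℕ)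
    (μ ν k l : Fin s → ℝ) (lam h : Fin (r - 1) → ℝ) (e : ℝ)
    (J A : Matrix (((Fin 2 × Fin s) ⊕ Fin (r - 1)) ⊕ Fin 1)
                  (((Fin 2 × Fin s) ⊕ Fin (r - 1)) ⊕ Fin 1) ℝ)
    (hJ : J = Matrix.fromBlocks
      (Matrix.fromBlocks
        (Matrix.blockDiagonal fun _ : Fin s => !![(1 : ℝ), 0; 0, -1]) 0 0 1)
      0 0 1)
    (hA : A = Matrix.fromBlocks
      (Matrix.fromBlocks
        (Matrix.blockDiagonal fun j : Fin s => !![μ j, ν j; ν j, -μ j]) 0 0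
        (Matrix.diagonal lam))
      (Matrix.of fun i (_ : Fin 1) =>
        Sum.elim (fun a : Fin 2 × Fin s => if a.1 = 0 then k a.2 else l a.2) h i)
      (Matrix.of fun (_ : Fin 1) j =>
        Sum.elim (fun a : Fin 2 × Fin s => if a.1 = 0 then k a.2 else l a.2) h j)
      (Matrix.of fun (_ _ : Fin 1) => e))
    (u : Polynomial ℝ) (hu : u = ∏ i, (X - C (lam i)))
    (ui : Fin (r - 1) → Polynomial ℝ)
    (hui : ∀ i, ui i = ∏ i' ∈ Finset.univ.erase i, (X - C (lam i')))
    (v : Polynomial ℝ) (hv : v = ∏ j, (-(X - C (μ j)) ^ 2 - C (ν j) ^ 2))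
    (vj : Fin s → Polynomial ℝ)
    (hvj : ∀ j, vj j = ∏ j' ∈ Finset.univ.erase j, (-(X - C (μ j')) ^ 2 - C (ν j') ^ 2)) :
    ((X : Polynomial ℝ) • J.map (C : ℝ → Polynomial ℝ)
        - A.map (C : ℝ → Polynomial ℝ)).det
      = (X - C e) * u * v
        - v * ∑ i, C (h i) ^ 2 * ui i
        - u * ∑ j, ((C (μ j) - X) * C (k j) ^ 2
            + 2 * C (ν j) * C (k j) * C (l j)
            + (X - C (μ j)) * C (l j) ^ 2) * vj j := by
  set w := Sum.elim (fun a : Fin 2 × Fin s => if a.1 = 0 then k a.2 else l a.2) h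
  have hJ' : J = arrowMatrix (fun _ => !![(1 : ℝ), 0; 0, -1]) 1 0 0 1 := by
    rw [hJ, arrowMatrix]
    simp only [diagonal_one', replicateCol_zero, replicateRow_zero, fromBlocks_inj, true_and]
    ext i j
    rw [of_apply, Subsingleton.elim i j, one_apply_eq]
  have hdet (j : Fin s) : (!![X - C (μ j), -C (ν j); -C (ν j), C (μ j) - X]).det
      = -(X - C (μ j)) ^ 2 - C (ν j) ^ 2 := by
    rw [det_fin_two_of]
    ring
  have hquad (j : Fin s) : (fun i => -C (w (.inl (i, j)))) ⬝ᵥ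
      adjugate !![X - C (μ j), -C (ν j); -C (ν j), C (μ j) - X] *ᵥ (fun i => -C (w (.inl (i, j))))
      = (C (μ j) - X) * C (k j) ^ 2 + 2 * C (ν j) * C (k j) * C (l j)
        + (X - C (μ j)) * C (l j) ^ 2 := by
    simp only [w, dotProduct, Fin.sum_univ_two, Sum.elim_inl, adjugate_fin_two_of, cons_mulVec,
      empty_mulVec, cons_val_zero, cons_val_one, cons_val_fin_one, Fin.isValue, one_ne_zero,
      if_true, if_false]
    ring
  have hsq (i : Fin (r - 1)) : -C (w (.inr i)) * -C (w (.inr i)) = C (h i) ^ 2 := by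
    simp [w, sq]
  rw [hJ', show A = arrowMatrix _ lam w w e from hA, X_smul_map_sub_map_arrowMatrix,
    det_arrowMatrix _ _ _ _ _ (fun j => hdet j ▸ neg_sq_X_sub_C_sub_C_sq_ne_zero _ _)
      (fun i => X_sub_C_ne_zero (lam i))]
  simp only [hdet, hquad, hsq, ← hu, ← hv, ← hui, ← hvj]
  ring

theorem stmt_16 (r s : ℕ) (hr : 1 ≤ r)
    (μ ν k l : Fin s → ℝ) (lam h : Fin (r - 1) → ℝ) (e : ℝ)
    (J A : Matrix (((Fin 2 × Fin s) ⊕ Fin (r - 1)) ⊕ Fin 1)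
                  (((Fin 2 × Fin s) ⊕ Fin (r - 1)) ⊕ Fin 1) ℝ)
    (hJ : J = Matrix.fromBlocks
      (Matrix.fromBlocks
        (Matrix.blockDiagonal fun _ : Fin s => !![(1 : ℝ), 0; 0, -1]) 0 0 1)
      0 0 1)
    (hA : A = Matrix.fromBlocks
      (Matrix.fromBlocks
        (Matrix.blockDiagonal fun j : Fin s => !![μ j, ν j; ν j, -μ j]) 0 0
        (Matrix.diagonal lam))
      (Matrix.of fun i (_ : Fin 1) =>
        Sum.elim (fun a : Fin 2 × Fin s => if a.1 = 0 then k a.2 else l a.2) h i)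
      (Matrix.of fun (_ : Fin 1) j =>
        Sum.elim (fun a : Fin 2 × Fin s => if a.1 = 0 then k a.2 else l a.2) h j)
      (Matrix.of fun (_ _ : Fin 1) => e))
    (u : Polynomial ℝ) (hu : u = ∏ i, (X - C (lam i)))
    (ui : Fin (r - 1) → Polynomial ℝ)
    (hui : ∀ i, ui i = ∏ i' ∈ Finset.univ.erase i, (X - C (lam i')))
    (v : Polynomial ℝ) (hv : v = ∏ j, (-(X - C (μ j)) ^ 2 - C (ν j) ^ 2))
    (vj : Fin s → Polynomial ℝ)
    (hvj : ∀ j, vj j = ∏ j' ∈ Finset.univ.erase j, (-(X - C (μ j')) ^ 2 - C (ν j') ^ 2)) :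
    ((X : Polynomial ℝ) • J.map (C : ℝ → Polynomial ℝ)
        - A.map (C : ℝ → Polynomial ℝ)).det
      = (X - C e) * u * v
        - v * ∑ i, C (h i) ^ 2 * ui i
        - u * ∑ j, ((C (μ j) - X) * C (k j) ^ 2
            + 2 * C (ν j) * C (k j) * C (l j)
            + (X - C (μ j)) * C (l j) ^ 2) * vj j :=
  stmt_16_general r s μ ν k l lam h e J A hJ hA u hu ui hui v hv vj hvj
end

section
/- Let n ≥ 1, let λ₁ < λ₂ < … < λ_n be real numbers, let h₁,…,h_n be nonzero real numbers, and let d ∈ ℝ. Then the polynomial p(X) = (X − d)·∏_{i=1}^{n}(X − λᵢ) + Σ_{i=1}^{n} hᵢ²·∏_{j≠i}(X − λⱼ) has at least n − 1 distinct real roots. -/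
/-!
At a node the first term and all but one summand of `p` vanish, so
`p(λᵢ) = hᵢ² ∏_{j ≠ i} (λᵢ - λⱼ)`, whose sign is `(-1)^(n-1-i)` because exactly the `n - 1 - i`
factors with `j > i` are negative. Hence `p` changes sign on each of the `n - 1` intervals
`(λₖ, λₖ₊₁)`, and the intermediate value theorem puts a root in each; the intervals are disjoint.
-/

open Polynomial Finset

theorem Polynomial.exists_isRoot_mem_Ioo_of_eval_mul_eval_neg (p : ℝ[X]) {a b : ℝ} (hab : a < b)
    (hs : p.eval a * p.eval b < 0) : ∃ x ∈ Set.Ioo a b, p.IsRoot x := by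
  rcases mul_neg_iff.mp hs with ⟨ha, hb⟩ | ⟨ha, hb⟩
  · exact intermediate_value_Ioo' hab.le p.continuous.continuousOn ⟨hb, ha⟩
  · exact intermediate_value_Ioo hab.le p.continuous.continuousOn ⟨ha, hb⟩

theorem eval_node_mul_prod_add_sum {R : Type*} [CommRing R] {n : ℕ} (lam w : Fin n → R)
    (q : R[X]) (i : Fin n) :
    eval (lam i) (q * ∏ j, (X - C (lam j)) + ∑ k, C (w k) * ∏ j ∈ univ.erase k, (X - C (lam j)))
      = w i * ∏ j ∈ univ.erase i, (lam i - lam j) := by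
  have hvanish : ∀ s : Finset (Fin n), i ∈ s → eval (lam i) (∏ j ∈ s, (X - C (lam j))) = 0 :=
    fun s hi => by simp [eval_prod, prod_eq_zero hi]
  have hother : ∀ k ≠ i, eval (lam i) (C (w k) * ∏ j ∈ univ.erase k, (X - C (lam j))) = 0 :=
    fun k hk => by rw [eval_mul, hvanish _ (mem_erase.2 ⟨Ne.symm hk, mem_univ i⟩), mul_zero]
  rw [eval_add, eval_mul, hvanish _ (mem_univ i), mul_zero, zero_add, eval_finsetSum,
    sum_eq_single_of_mem i (mem_univ i) fun k _ => hother k]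
  simp [eval_prod]

theorem StrictMono.neg_one_pow_mul_prod_erase_sub_pos {R : Type*} [CommRing R] [LinearOrder R]
    [IsStrictOrderedRing R] {n : ℕ} {lam : Fin n → R} (hlam : StrictMono lam) (i : Fin n) :
    0 < (-1) ^ (n - 1 - (i : ℕ)) * ∏ j ∈ univ.erase i, (lam i - lam j) := by
  have hsign : ((-1 : R) ^ (n - 1 - (i : ℕ))) = ∏ j ∈ univ.erase i, if i < j then -1 else 1 := by
    rw [prod_ite, prod_const_one, mul_one, prod_const, ← Fin.card_Ioi]
    congr 2
    ext j
    simpa using fun hij : i < j => hij.ne'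
  rw [hsign, ← prod_mul_distrib]
  refine prod_pos fun j hj => ?_
  rcases lt_or_gt_of_ne (mem_erase.1 hj).1 with hji | hij
  · simpa [hji.not_gt] using hlam hji
  · simpa [hij] using hlam hij

theorem StrictMono.prod_erase_sub_castSucc_mul_prod_erase_sub_succ_neg {R : Type*} [CommRing R]
    [LinearOrder R] [IsStrictOrderedRing R] {m : ℕ} {lam : Fin (m + 1) → R} (hlam : StrictMono lam)
    (k : Fin m) :
    (∏ j ∈ univ.erase k.castSucc, (lam k.castSucc - lam j))
      * ∏ j ∈ univ.erase k.succ, (lam k.succ - lam j) < 0 := by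
  have hl := hlam.neg_one_pow_mul_prod_erase_sub_pos k.castSucc
  have hr := hlam.neg_one_pow_mul_prod_erase_sub_pos k.succ
  have hexp : m + 1 - 1 - (k.castSucc : ℕ) = (m + 1 - 1 - (k.succ : ℕ)) + 1 := by
    simp only [Fin.val_castSucc, Fin.val_succ]; omega
  rw [hexp, pow_succ] at hl
  have hsq : ((-1 : R) ^ (m + 1 - 1 - (k.succ : ℕ))) ^ 2 = 1 := by
    rw [← pow_mul, mul_comm, pow_mul, neg_one_sq, one_pow]
  nlinarith [mul_pos hl hr]

theorem exists_finset_card_eq_of_forall_exists_mem_Ioo {α : Type*} [LinearOrder α] {m : ℕ}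
    {a : Fin (m + 1) → α} (ha : StrictMono a) {P : α → Prop}
    (hP : ∀ k : Fin m, ∃ x ∈ Set.Ioo (a k.castSucc) (a k.succ), P x) :
    ∃ t : Finset α, t.card = m ∧ ∀ x ∈ t, P x := by
  choose r hr hPr using hP
  have hr_mono : StrictMono r := fun k l hkl =>
    calc r k < a k.succ := (hr k).2
      _ ≤ a l.castSucc := ha.monotone (Fin.succ_le_castSucc_iff.2 hkl)
      _ < r l := (hr l).1
  refine ⟨univ.image r, ?_, ?_⟩
  · rw [card_image_of_injective _ hr_mono.injective, card_univ, Fintype.card_fin]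
  · simpa using hPr

theorem stmt_17_general (n : ℕ)
    (lam : Fin n → ℝ) (hlam : StrictMono lam)
    (h : Fin n → ℝ) (hh : ∀ i, h i ≠ 0) (d : ℝ)
    (p : Polynomial ℝ)
    (hp : p = (X - C d) * ∏ i, (X - C (lam i))
      + ∑ i, C (h i) ^ 2 * ∏ j ∈ Finset.univ.erase i, (X - C (lam j))) :
    ∃ t : Finset ℝ, t.card = n - 1 ∧ ∀ x ∈ t, p.IsRoot x := by
  cases n with
  | zero => exact ⟨∅, rfl, by simp⟩
  | succ m =>
    have heval (i : Fin (m + 1)) :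
        p.eval (lam i) = h i ^ 2 * ∏ j ∈ univ.erase i, (lam i - lam j) := by
      simp_rw [hp, ← C_pow]
      exact eval_node_mul_prod_add_sum lam (fun k => h k ^ 2) _ i
    refine exists_finset_card_eq_of_forall_exists_mem_Ioo hlam fun k =>
      p.exists_isRoot_mem_Ioo_of_eval_mul_eval_neg (hlam k.castSucc_lt_succ) ?_
    rw [heval, heval, mul_mul_mul_comm]
    exact mul_neg_of_pos_of_neg (mul_pos (sq_pos_of_ne_zero (hh _)) (sq_pos_of_ne_zero (hh _)))
      (hlam.prod_erase_sub_castSucc_mul_prod_erase_sub_succ_neg k)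

theorem stmt_17 (n : ℕ) (hn : 1 ≤ n)
    (lam : Fin n → ℝ) (hlam : StrictMono lam)
    (h : Fin n → ℝ) (hh : ∀ i, h i ≠ 0) (d : ℝ)
    (p : Polynomial ℝ)
    (hp : p = (X - C d) * ∏ i, (X - C (lam i))
      + ∑ i, C (h i) ^ 2 * ∏ j ∈ Finset.univ.erase i, (X - C (lam j))) :
    ∃ t : Finset ℝ, t.card = n - 1 ∧ ∀ x ∈ t, p.IsRoot x :=
  stmt_17_general n lam hlam h hh d p hp
end
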